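/- Let ρ be a density matrix, Π a projection, ρ^Π = ΠρΠ, ρ^{Π̄} = (I−Π)ρ(I−Π), W = Tr[ρ^{Π̄}], H the block off-diagonal part of ρ with ‖H‖₁ ≤ 2ε, and Γ an operator with 0 ≤ Γ ≤ I. Then Tr[ρ^Π Γ] ≤ Tr[ρΓ] + ε and Tr[ρ^Π Γ] ≥ Tr[ρΓ] − W − ε. -/

import Mathlib

/-!
Split the traceless Hermitian `H = ρ - PρP - (1-P)ρ(1-P)` as `H = H⁺ - H⁻` with `H⁺, H⁻ ≥ 0`.
Since `Tr H = 0` and `Tr H⁺ + Tr H⁻ = Tr |H| = ‖H‖₁`, both `Tr H⁺` and `Tr H⁻` equal `‖H‖₁ / 2 ≤ ε`.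
For `A ≥ 0` and `0 ≤ Γ ≤ 1` one has `0 ≤ Tr[AΓ] ≤ Tr A`, so `|Tr[HΓ]| ≤ ε`. Expanding
`Tr[HΓ] = Tr[ρΓ] - Tr[PρPΓ] - Tr[(1-P)ρ(1-P)Γ]` and using `0 ≤ Tr[(1-P)ρ(1-P)Γ] ≤ W` gives
both bounds.
-/

open Matrix ComplexOrder

/-- The trace norm `‖A‖₁ = Tr √(AᴴA)` of a complex matrix. -/
noncomputable def traceNorm {d : ℕ} (A : Matrix (Fin d) (Fin d) ℂ) : ℝ :=
  ((Matrix.posSemidef_conjTranspose_mul_self A).1.eigenvectorUnitary.1 *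
    diagonal (((↑) : ℝ → ℂ) ∘ (Real.sqrt ·) ∘ (Matrix.posSemidef_conjTranspose_mul_self A).1.eigenvalues) *
    (star (Matrix.posSemidef_conjTranspose_mul_self A).1.eigenvectorUnitary :
      Matrix (Fin d) (Fin d) ℂ)).trace.re

open scoped MatrixOrder

lemma traceNorm_eq_re_trace_abs {d : ℕ} (A : Matrix (Fin d) (Fin d) ℂ) :
    traceNorm A = (CFC.abs A).trace.re := by
  have h := posSemidef_conjTranspose_mul_self A
  rw [traceNorm, CFC.abs, CFC.sqrt_eq_real_sqrt (star A * A) h.nonneg, cfcₙ_eq_cfc]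
  exact congrArg (·.trace.re) (h.1.cfc_eq Real.sqrt).symm

namespace Matrix

variable {n : Type*} [Fintype n] [DecidableEq n]

lemma trace_mul_mul_add_trace_one_sub_mul_mul {R : Type*} [CommRing R] {A P : Matrix n n R}
    (hP : IsIdempotentElem P) :
    (P * A * P).trace + ((1 - P) * A * (1 - P)).trace = A.trace := by
  rw [trace_mul_cycle, hP.eq, trace_mul_cycle (1 - P), hP.one_sub.eq, ← trace_add, ← add_mul,
    add_sub_cancel, one_mul]

variable {𝕜 : Type*} [RCLike 𝕜]

lemma PosSemidef.trace_mul_nonneg {A B : Matrix n n 𝕜} (hA : A.PosSemidef) (hB : B.PosSemidef) :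
    0 ≤ (A * B).trace := by
  have hS : (CFC.sqrt B)ᴴ = CFC.sqrt B := (CFC.sqrt_nonneg B).posSemidef.1.eq
  calc 0 ≤ (CFC.sqrt B * A * (CFC.sqrt B)ᴴ).trace :=
        (hA.mul_mul_conjTranspose_same _).trace_nonneg
    _ = (A * B).trace := by
      rw [hS, trace_mul_cycle, CFC.sqrt_mul_sqrt_self B hB.nonneg, trace_mul_comm]

lemma PosSemidef.trace_mul_le_trace {A Γ : Matrix n n 𝕜} (hA : A.PosSemidef)
    (hΓ : (1 - Γ).PosSemidef) : (A * Γ).trace ≤ A.trace := by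
  simpa only [mul_sub, mul_one, trace_sub, sub_nonneg] using hA.trace_mul_nonneg hΓ

lemma IsHermitian.two_mul_abs_re_trace_mul_le {H Γ : Matrix n n 𝕜} (hH : H.IsHermitian)
    (htr : H.trace = 0) (hΓ : Γ.PosSemidef) (hΓle : (1 - Γ).PosSemidef) :
    2 * |RCLike.re (H * Γ).trace| ≤ RCLike.re (CFC.abs H).trace := by
  have hH' : IsSelfAdjoint H := hH
  have hpos : (H⁺).PosSemidef := (CFC.posPart_nonneg H).posSemidef
  have hneg : (H⁻).PosSemidef := (CFC.negPart_nonneg H).posSemidef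
  have re_le {x y : 𝕜} (h : x ≤ y) : RCLike.re x ≤ RCLike.re y := (RCLike.le_iff_re_im.mp h).1
  have htr_pos : RCLike.re (CFC.abs H).trace = 2 * RCLike.re H⁺.trace := by
    simpa [htr, two_mul] using congrArg (RCLike.re ∘ trace) (CFC.abs_add_self H)
  have htr_neg : RCLike.re (CFC.abs H).trace = 2 * RCLike.re H⁻.trace := by
    simpa [htr, two_mul] using congrArg (RCLike.re ∘ trace) (CFC.abs_sub_self H)
  have hsplit : (H * Γ).trace = (H⁺ * Γ).trace - (H⁻ * Γ).trace := by
    rw [← trace_sub, ← sub_mul, CFC.posPart_sub_negPart H]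
  have hpos₀ := (RCLike.nonneg_iff.mp (hpos.trace_mul_nonneg hΓ)).1
  have hneg₀ := (RCLike.nonneg_iff.mp (hneg.trace_mul_nonneg hΓ)).1
  rw [hsplit, map_sub, ← abs_two, ← abs_mul, abs_le]
  constructor <;>
    linarith [re_le (hpos.trace_mul_le_trace hΓle), re_le (hneg.trace_mul_le_trace hΓle)]

end Matrix

theorem trace_proj_block_bounds_general {d : ℕ}
    (ρ P Γ : Matrix (Fin d) (Fin d) ℂ) (ε : ℝ)
    (hρ : ρ.PosSemidef)
    (hP1 : Pᴴ = P) (hP2 : P * P = P)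
    (hΓ : Γ.PosSemidef) (hΓle : (1 - Γ).PosSemidef)
    (hH : traceNorm (ρ - P * ρ * P - (1 - P) * ρ * (1 - P)) ≤ 2 * ε) :
    ((P * ρ * P) * Γ).trace.re ≤ (ρ * Γ).trace.re + ε ∧
    (ρ * Γ).trace.re - ((1 - P) * ρ * (1 - P)).trace.re - ε ≤
      ((P * ρ * P) * Γ).trace.re := by
  have hQ1 : (1 - P)ᴴ = 1 - P := by rw [conjTranspose_sub, conjTranspose_one, hP1]
  have hρP : (P * ρ * P).PosSemidef := by
    have := hρ.mul_mul_conjTranspose_same P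
    rwa [hP1] at this
  have hρQ : ((1 - P) * ρ * (1 - P)).PosSemidef := by
    have := hρ.mul_mul_conjTranspose_same (1 - P)
    rwa [hQ1] at this
  have hHtr : (ρ - P * ρ * P - (1 - P) * ρ * (1 - P)).trace = 0 := by
    rw [trace_sub, trace_sub, sub_sub, trace_mul_mul_add_trace_one_sub_mul_mul hP2, sub_self]
  have hHΓ := ((hρ.1.sub hρP.1).sub hρQ.1).two_mul_abs_re_trace_mul_le hHtr hΓ hΓle
  rw [RCLike.re_to_complex, RCLike.re_to_complex, ← traceNorm_eq_re_trace_abs, sub_mul, sub_mul,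
    trace_sub, trace_sub, Complex.sub_re, Complex.sub_re, ← abs_two, ← abs_mul, abs_le] at hHΓ
  have hW₀ := (Complex.nonneg_iff.mp (hρQ.trace_mul_nonneg hΓ)).1
  have hW := (Complex.le_def.mp (hρQ.trace_mul_le_trace hΓle)).1
  constructor <;> linarith

/-- Let `ρ` be a density matrix, `P` a projection, `ρ^Π = PρP`,
`ρ^Π̄ = (1−P)ρ(1−P)`, `W = Tr[ρ^Π̄]`, `H = ρ − ρ^Π − ρ^Π̄` with `‖H‖₁ ≤ 2ε`, and
`0 ≤ Γ ≤ I`.  Then `Tr[ρ^Π Γ] ≤ Tr[ρΓ] + ε` and `Tr[ρ^Π Γ] ≥ Tr[ρΓ] − W − ε`. -/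
theorem trace_proj_block_bounds {d : ℕ}
    (ρ P Γ : Matrix (Fin d) (Fin d) ℂ) (ε : ℝ)
    (hρ : ρ.PosSemidef) (hρtr : ρ.trace = 1)
    (hP1 : Pᴴ = P) (hP2 : P * P = P)
    (hΓ : Γ.PosSemidef) (hΓle : (1 - Γ).PosSemidef)
    (hH : traceNorm (ρ - P * ρ * P - (1 - P) * ρ * (1 - P)) ≤ 2 * ε) :
    ((P * ρ * P) * Γ).trace.re ≤ (ρ * Γ).trace.re + ε ∧
    (ρ * Γ).trace.re - ((1 - P) * ρ * (1 - P)).trace.re - ε ≤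
      ((P * ρ * P) * Γ).trace.re :=
  trace_proj_block_bounds_general ρ P Γ ε hρ hP1 hP2 hΓ hΓle hH
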